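/- arXiv:0903.3976 — 4 statements merged into one kernel-verified Lean document; each statement's English description precedes it below -/
import Mathlib

section
/- Let m ≥ 1 be a natural number, let h : ℂ → ℂ be analytic at 0 with h(0) ≠ 0, and set η(x) = x^m·h(x). Let V be analytic at 0 and U(x) = (m−1)m/x² + V(x) for x ≠ 0 near 0. Then the Darboux-transformed potential Ũ(x) = U(x) − 2·(η'/η)'(x) satisfies: the function x ↦ Ũ(x) − m(m+1)/x², defined for x ≠ 0 near 0, extends to a function analytic at 0. In particular, the leading singularity of the potential increases from (m−1)m/x² to m(m+1)/x². -/
/-! Away from `0`, `η'/η = m/x + h'/h`, so `(η'/η)' = -m/x² + (h'/h)'`. Since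
`(m-1)m + 2m = m(m+1)`, this gives `Ũ - m(m+1)/x² = V - 2 (h'/h)'`, which is analytic at `0`
because `h(0) ≠ 0`. -/

open Filter Topology

section LogDeriv

variable {𝕜 : Type*} [NontriviallyNormedField 𝕜] {h : 𝕜 → 𝕜} {x : 𝕜}

theorem AnalyticAt.logDeriv [CompleteSpace 𝕜] (hh : AnalyticAt 𝕜 h x) (hhx : h x ≠ 0) :
    AnalyticAt 𝕜 (_root_.logDeriv h) x :=
  hh.deriv.div hh hhx

theorem logDeriv_pow_mul (n : ℕ) (hx : x ≠ 0) (hhx : h x ≠ 0) (hdh : DifferentiableAt 𝕜 h x) :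
    logDeriv (fun s => s ^ n * h s) x = n / x + logDeriv h x := by
  rw [logDeriv_mul x (pow_ne_zero n hx) hhx (f := (· ^ n)) (by fun_prop) hdh, logDeriv_pow]

theorem deriv_logDeriv_pow_mul [CompleteSpace 𝕜] (n : ℕ) (hx : x ≠ 0)
    (hh : AnalyticAt 𝕜 h x) (hhx : h x ≠ 0) :
    deriv (logDeriv fun s => s ^ n * h s) x = -n / x ^ 2 + deriv (logDeriv h) x := by
  have hlocal : logDeriv (fun s => s ^ n * h s) =ᶠ[𝓝 x] fun y => n * y⁻¹ + logDeriv h y := by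
    filter_upwards [eventually_ne_nhds hx, hh.eventually_analyticAt,
      hh.continuousAt.eventually_ne hhx] with y hy hay hhy
    rw [logDeriv_pow_mul n hy hhy hay.differentiableAt, div_eq_mul_inv]
  rw [hlocal.deriv_eq, deriv_fun_add ((differentiableAt_inv hx).const_mul _)
    (hh.logDeriv hhx).differentiableAt, deriv_const_mul _ (differentiableAt_inv hx), deriv_inv]
  ring

end LogDeriv

theorem stmt_5_general (m : ℕ) (h V U : ℂ → ℂ)
    (hh : AnalyticAt ℂ h 0) (hh0 : h 0 ≠ 0) (hV : AnalyticAt ℂ V 0)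
    (hU : ∀ᶠ x in nhdsWithin (0 : ℂ) {0}ᶜ,
      U x = ((m : ℂ) - 1) * m / x ^ 2 + V x) :
    ∃ W : ℂ → ℂ, AnalyticAt ℂ W 0 ∧
      ∀ᶠ x in nhdsWithin (0 : ℂ) {0}ᶜ,
        (U x - 2 * deriv (fun y : ℂ =>
            deriv (fun s : ℂ => s ^ m * h s) y / (y ^ m * h y)) x)
          - (m : ℂ) * (m + 1) / x ^ 2 = W x := by
  refine ⟨fun x => V x - 2 * deriv (logDeriv h) x,
    hV.sub (analyticAt_const.mul (hh.logDeriv hh0).deriv), ?_⟩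
  filter_upwards [hU, self_mem_nhdsWithin, nhdsWithin_le_nhds
    (hh.eventually_analyticAt.and (hh.continuousAt.eventually_ne hh0))]
    with x hUx (hx : x ≠ 0) ⟨hhx, hhx0⟩
  change U x - 2 * deriv (logDeriv fun s => s ^ m * h s) x - _ = _
  rw [hUx, deriv_logDeriv_pow_mul m hx hhx hhx0]
  field_simp
  ring

/-- Local mechanism of the Crum transformation at a pole: if `η(x) = x^m·h(x)` with
`h` analytic at `0`, `h(0) ≠ 0`, `m ≥ 1`, and `U(x) = (m−1)m/x² + V(x)` near `0`
(`V` analytic at `0`), then `Ũ = U − 2(η'/η)'` is such that `Ũ(x) − m(m+1)/x²`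
extends to a function analytic at `0`. -/
theorem stmt_5 (m : ℕ) (hm : 1 ≤ m) (h V U : ℂ → ℂ)
    (hh : AnalyticAt ℂ h 0) (hh0 : h 0 ≠ 0) (hV : AnalyticAt ℂ V 0)
    (hU : ∀ᶠ x in nhdsWithin (0 : ℂ) {0}ᶜ,
      U x = ((m : ℂ) - 1) * m / x ^ 2 + V x) :
    ∃ W : ℂ → ℂ, AnalyticAt ℂ W 0 ∧
      ∀ᶠ x in nhdsWithin (0 : ℂ) {0}ᶜ,
        (U x - 2 * deriv (fun y : ℂ =>
            deriv (fun s : ℂ => s ^ m * h s) y / (y ^ m * h y)) x)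
          - (m : ℂ) * (m + 1) / x ^ 2 = W x :=
  stmt_5_general m h V U hh hh0 hV hU
end

section
/- Let η ∈ ℂ with η³ = 1 and η ≠ 1, and let a, b ∈ ℂ with a ≠ 0, b ≠ 0 and a³ ≠ b³. Then the six numbers (a, aη, aη², b, bη, bη²) are pairwise distinct, and they satisfy the system a_j = 3·Σ_{p≠j} (a_j − a_p)^{−2} for every j ∈ {1,…,6} if and only if A = a³ and B = b³ satisfy the two equations A·(A−B)² = (A−B)² + 9A(A+2B) and B·(A−B)² = (A−B)² + 9B(B+2A). -/
open Finset

/-!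
For `c³ ≠ d³` the three numbers `c - d η^k` have elementary symmetric functions `3c`, `3c²` and
`c³ - d³`, so `Σ_k (c - d η^k)⁻² = 3c(c³ + 2d³)/(c³ - d³)²`. Multiplying `d` by `η` only permutes
the orbit, so when `c` lies in the orbit of `d` the same sum is `(3c²)⁻¹` (the term `c - c`
contributes `0⁻¹ = 0`). Hence the equation at any point `c` of the orbit of `a` depends only on
`a³` and `b³`, and clearing denominators turns it into the polynomial equation for `a³`;
symmetrically for the orbit of `b`. Distinctness follows by comparing cubes across the orbits
and from `η` being primitive within an orbit.
-/

section CubeOrbits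

variable {K : Type*} [Field K] {η c d : K}

theorem IsPrimitiveRoot.sq_add_self_add_one {R : Type*} [CommRing R] [IsDomain R] {ζ : R}
    (hζ : IsPrimitiveRoot ζ 3) : ζ ^ 2 + ζ + 1 = 0 := by
  have h := hζ.geom_sum_eq_zero (by norm_num : 1 < 3)
  simp only [sum_range_succ, range_zero, sum_empty] at h
  linear_combination h

theorem IsPrimitiveRoot.three_ne_zero (hη : IsPrimitiveRoot η 3) : (3 : K) ≠ 0 := by
  exact_mod_cast (hη.neZero' (R := K)).out

theorem sub_mul_sub_mul_sub_eq_pow_three_sub_pow_three (hη : η ^ 2 + η + 1 = 0) (c d : K) :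
    (c - d) * (c - d * η) * (c - d * η ^ 2) = c ^ 3 - d ^ 3 := by
  linear_combination (c * d ^ 2 * η - c ^ 2 * d - d ^ 3 * (η - 1)) * hη

theorem inv_sq_add_inv_sq_add_inv_sq {x y z : K} (hx : x ≠ 0) (hy : y ≠ 0) (hz : z ≠ 0) :
    (x ^ 2)⁻¹ + (y ^ 2)⁻¹ + (z ^ 2)⁻¹
      = ((x * y + y * z + z * x) ^ 2 - 2 * (x + y + z) * (x * y * z)) / (x * y * z) ^ 2 := by
  field_simp
  ring

def orbitInvSqSum (η c d : K) : K :=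
  ((c - d) ^ 2)⁻¹ + ((c - d * η) ^ 2)⁻¹ + ((c - d * η ^ 2) ^ 2)⁻¹

theorem orbitInvSqSum_mul_root (hη : η ^ 3 = 1) (c d : K) :
    orbitInvSqSum η c (d * η) = orbitInvSqSum η c d := by
  rw [orbitInvSqSum, orbitInvSqSum, show d * η * η = d * η ^ 2 by ring,
    show d * η * η ^ 2 = d by linear_combination d * hη]
  ring

theorem orbitInvSqSum_self (hη : IsPrimitiveRoot η 3) (hc : c ≠ 0) :
    orbitInvSqSum η c c = (3 * c ^ 2)⁻¹ := by
  have hs := hη.sq_add_self_add_one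
  have h3 := hη.three_ne_zero
  have hη0 : η ≠ 0 := hη.ne_zero (by norm_num)
  have h1 : (c - c * η) ^ 2 = -3 * η * c ^ 2 := by linear_combination c ^ 2 * hs
  have h2 : (c - c * η ^ 2) ^ 2 = -3 * η ^ 2 * c ^ 2 := by
    linear_combination c ^ 2 * (η ^ 2 - η + 1) * hs
  rw [orbitInvSqSum, sub_self, h1, h2]
  field_simp
  linear_combination (-1) * hs

theorem orbitInvSqSum_of_pow_three_eq (hη : IsPrimitiveRoot η 3) (hc : c ≠ 0)
    (h : c ^ 3 = d ^ 3) : orbitInvSqSum η c d = (3 * c ^ 2)⁻¹ := by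
  have hη3 := hη.pow_eq_one
  have hprod := sub_mul_sub_mul_sub_eq_pow_three_sub_pow_three hη.sq_add_self_add_one c d
  rw [h, sub_self, mul_eq_zero, mul_eq_zero, sub_eq_zero, sub_eq_zero, sub_eq_zero] at hprod
  rcases hprod with (rfl | rfl) | rfl
  · exact orbitInvSqSum_self hη hc
  · rw [← orbitInvSqSum_mul_root hη3, orbitInvSqSum_self hη hc]
  · rw [← orbitInvSqSum_mul_root hη3, ← orbitInvSqSum_mul_root hη3, mul_assoc, ← sq,
      orbitInvSqSum_self hη hc]

theorem orbitInvSqSum_of_pow_three_ne (hη : η ^ 2 + η + 1 = 0) (h : c ^ 3 ≠ d ^ 3) :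
    orbitInvSqSum η c d = 3 * c * (c ^ 3 + 2 * d ^ 3) / (c ^ 3 - d ^ 3) ^ 2 := by
  have hprod := sub_mul_sub_mul_sub_eq_pow_three_sub_pow_three hη c d
  have hne : (c - d) * (c - d * η) * (c - d * η ^ 2) ≠ 0 := hprod ▸ sub_ne_zero.2 h
  obtain ⟨⟨h0, h1⟩, h2⟩ := mul_ne_zero_iff.1 hne |>.imp_left mul_ne_zero_iff.1
  have hsum : (c - d) + (c - d * η) + (c - d * η ^ 2) = 3 * c := by linear_combination -d * hη
  have hpair : (c - d) * (c - d * η) + (c - d * η) * (c - d * η ^ 2) + (c - d * η ^ 2) * (c - d)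
      = 3 * c ^ 2 := by
    linear_combination (d ^ 2 * η - 2 * c * d) * hη
  rw [orbitInvSqSum, inv_sq_add_inv_sq_add_inv_sq h0 h1 h2, hsum, hpair, hprod]
  ring

theorem eq_three_mul_orbitInvSqSum_add_iff {a b : K} (hη : IsPrimitiveRoot η 3) (ha : a ≠ 0)
    (hab : a ^ 3 ≠ b ^ 3) (hc : c ^ 3 = a ^ 3) :
    c = 3 * (orbitInvSqSum η c a + orbitInvSqSum η c b) ↔
      a ^ 3 * (a ^ 3 - b ^ 3) ^ 2 = (a ^ 3 - b ^ 3) ^ 2 + 9 * a ^ 3 * (a ^ 3 + 2 * b ^ 3) := by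
  have hc0 : c ≠ 0 := (pow_ne_zero_iff three_ne_zero).1 (hc ▸ pow_ne_zero 3 ha)
  rw [orbitInvSqSum_of_pow_three_eq hη hc0 hc,
    orbitInvSqSum_of_pow_three_ne hη.sq_add_self_add_one (hc ▸ hab), ← hc]
  have hcb : c ^ 3 - b ^ 3 ≠ 0 := sub_ne_zero.2 (hc ▸ hab)
  have h3 := hη.three_ne_zero
  field_simp
  constructor <;> intro h <;> linear_combination h

def cubeOrbit (η c : K) : Fin 3 → K := ![c, c * η, c * η ^ 2]

theorem cubeOrbit_pow_three (hη : η ^ 3 = 1) (c : K) (k : Fin 3) :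
    cubeOrbit η c k ^ 3 = c ^ 3 := by
  fin_cases k
  · rfl
  · show (c * η) ^ 3 = c ^ 3
    linear_combination c ^ 3 * hη
  · show (c * η ^ 2) ^ 3 = c ^ 3
    linear_combination c ^ 3 * (η ^ 3 + 1) * hη

theorem cubeOrbit_injective (hη : IsPrimitiveRoot η 3) (hc : c ≠ 0) :
    Function.Injective (cubeOrbit η c) := by
  have hpow : cubeOrbit η c = fun k : Fin 3 => c * η ^ (k : ℕ) := by
    funext k
    fin_cases k <;> simp [cubeOrbit]
  rw [hpow]
  intro i j hij
  exact Fin.ext (hη.pow_inj i.isLt j.isLt (mul_left_cancel₀ hc hij))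

theorem append_cubeOrbit_pow_three (hη : η ^ 3 = 1) (a b : K) (j : Fin (3 + 3)) :
    Fin.append (cubeOrbit η a) (cubeOrbit η b) j ^ 3 = a ^ 3 ∨
      Fin.append (cubeOrbit η a) (cubeOrbit η b) j ^ 3 = b ^ 3 := by
  induction j using Fin.addCases with
  | left k => exact .inl (by rw [Fin.append_left, cubeOrbit_pow_three hη])
  | right k => exact .inr (by rw [Fin.append_right, cubeOrbit_pow_three hη])

theorem append_cubeOrbit_injective {a b : K} (hη : IsPrimitiveRoot η 3) (ha : a ≠ 0)
    (hb : b ≠ 0) (hab : a ^ 3 ≠ b ^ 3) :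
    Function.Injective (Fin.append (cubeOrbit η a) (cubeOrbit η b)) := by
  rw [Fin.append_injective_iff]
  refine ⟨cubeOrbit_injective hη ha, cubeOrbit_injective hη hb, fun i j hij => hab ?_⟩
  rw [← cubeOrbit_pow_three hη.pow_eq_one a i, hij, cubeOrbit_pow_three hη.pow_eq_one]

theorem sum_inv_sq_sub_append_cubeOrbit (η a b x : K) :
    ∑ p, ((x - Fin.append (cubeOrbit η a) (cubeOrbit η b) p) ^ 2)⁻¹
      = orbitInvSqSum η x a + orbitInvSqSum η x b := by
  simp only [Fin.sum_univ_add, Fin.append_left, Fin.append_right, Fin.sum_univ_three, cubeOrbit,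
    orbitInvSqSum]
  rfl

end CubeOrbits

/-- The `N = 6` (Lamé `n = 3`) two-orbit configuration: with `η` a primitive cube
root of unity and `a, b ≠ 0`, `a³ ≠ b³`, the six numbers `(a, aη, aη², b, bη, bη²)`
are pairwise distinct, and they solve `a_j = 3·Σ_{p≠j}(a_j − a_p)^{−2}` iff
`A = a³`, `B = b³` satisfy `A(A−B)² = (A−B)² + 9A(A+2B)` and
`B(A−B)² = (A−B)² + 9B(B+2A)`. -/
theorem stmt_12 (η a b : ℂ) (hη3 : η ^ 3 = 1) (hη1 : η ≠ 1)
    (ha : a ≠ 0) (hb : b ≠ 0) (hab : a ^ 3 ≠ b ^ 3) :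
    Function.Injective
      (![a, a * η, a * η ^ 2, b, b * η, b * η ^ 2] : Fin 6 → ℂ) ∧
    ((∀ j : Fin 6,
        (![a, a * η, a * η ^ 2, b, b * η, b * η ^ 2] : Fin 6 → ℂ) j
          = 3 * ∑ p ∈ univ.erase j,
              (((![a, a * η, a * η ^ 2, b, b * η, b * η ^ 2] : Fin 6 → ℂ) j
                - (![a, a * η, a * η ^ 2, b, b * η, b * η ^ 2] : Fin 6 → ℂ) p)
                ^ 2)⁻¹)
      ↔ (a ^ 3 * (a ^ 3 - b ^ 3) ^ 2
            = (a ^ 3 - b ^ 3) ^ 2 + 9 * a ^ 3 * (a ^ 3 + 2 * b ^ 3) ∧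
         b ^ 3 * (a ^ 3 - b ^ 3) ^ 2
            = (a ^ 3 - b ^ 3) ^ 2 + 9 * b ^ 3 * (b ^ 3 + 2 * a ^ 3))) := by
  have hη : IsPrimitiveRoot η 3 := IsPrimitiveRoot.iff_orderOf.2 (orderOf_eq_prime hη3 hη1)
  have hf : (![a, a * η, a * η ^ 2, b, b * η, b * η ^ 2] : Fin 6 → ℂ)
      = Fin.append (cubeOrbit η a) (cubeOrbit η b) := by
    funext j
    fin_cases j <;> rfl
  rw [hf]
  set f := Fin.append (cubeOrbit η a) (cubeOrbit η b)
  -- the omitted term `p = j` is `(0 ^ 2)⁻¹ = 0`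
  have hsum : ∀ j, ∑ p ∈ univ.erase j, ((f j - f p) ^ 2)⁻¹
      = orbitInvSqSum η (f j) a + orbitInvSqSum η (f j) b := fun j => by
    rw [sum_erase _ (by simp), sum_inv_sq_sub_append_cubeOrbit]
  have hA (c : ℂ) (hc : c ^ 3 = a ^ 3) := eq_three_mul_orbitInvSqSum_add_iff (b := b) hη ha hab hc
  have hB (c : ℂ) (hc : c ^ 3 = b ^ 3) : c = 3 * (orbitInvSqSum η c a + orbitInvSqSum η c b) ↔
      b ^ 3 * (a ^ 3 - b ^ 3) ^ 2 = (a ^ 3 - b ^ 3) ^ 2 + 9 * b ^ 3 * (b ^ 3 + 2 * a ^ 3) := by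
    rw [add_comm, eq_three_mul_orbitInvSqSum_add_iff hη hb hab.symm hc, ← neg_sub (a ^ 3),
      neg_sq]
  simp only [hsum]
  refine ⟨append_cubeOrbit_injective hη ha hb hab, fun H => ⟨?_, ?_⟩, ?_⟩
  · exact (hA a rfl).1 (H 0)
  · exact (hB b rfl).1 (H 3)
  · rintro ⟨hPA, hPB⟩ j
    rcases append_cubeOrbit_pow_three hη3 a b j with h | h
    exacts [(hA _ h).2 hPA, (hB _ h).2 hPB]
end

section
/- Let A, B ∈ ℂ with A ≠ B, and suppose A·(A−B)² = (A−B)² + 9A(A+2B) and B·(A−B)² = (A−B)² + 9B(B+2A). Then A + B = 5, A·B = −5, A² + 7AB + B² = 0, B ≠ 0, and w = A/B satisfies w² + 7w + 1 = 0 (so w = (−7 ± √45)/2). -/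
/-!
Subtracting the two equations gives `(A - B)³ = 9 (A - B)(A + B)`, so `(A - B)² = 9 (A + B)`
since `A ≠ B`. Adding them and substituting this turns everything into the elementary symmetric
functions `s = A + B`, `p = A B`: one finds `p = -s`, and then `s² - 4p = 9s` reads `s (s - 5) = 0`.
Here `s ≠ 0`, as otherwise `(A - B)² = 0`; so `s = 5`, `p = -5`, and `A / B` is a root of
`w² + 7w + 1`, whose discriminant is `45`.
-/

section TwoOrbit

variable {K : Type*} [Field K] {A B : K}

theorem sub_sq_eq_of_two_orbit (hAB : A ≠ B)
    (h1 : A * (A - B) ^ 2 = (A - B) ^ 2 + 9 * A * (A + 2 * B))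
    (h2 : B * (A - B) ^ 2 = (A - B) ^ 2 + 9 * B * (B + 2 * A)) :
    (A - B) ^ 2 = 9 * (A + B) :=
  mul_left_cancel₀ (sub_ne_zero.mpr hAB) (by linear_combination h1 - h2)

theorem mul_eq_neg_add_of_two_orbit [CharZero K] (hAB : A ≠ B)
    (h1 : A * (A - B) ^ 2 = (A - B) ^ 2 + 9 * A * (A + 2 * B))
    (h2 : B * (A - B) ^ 2 = (A - B) ^ 2 + 9 * B * (B + 2 * A)) :
    A * B = -(A + B) := by
  have hd := sub_sq_eq_of_two_orbit hAB h1 h2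
  linear_combination -(h1 / 18) - h2 / 18 + (A + B - 2) / 18 * hd

theorem add_eq_five_and_mul_eq_neg_five_of_two_orbit [CharZero K] (hAB : A ≠ B)
    (h1 : A * (A - B) ^ 2 = (A - B) ^ 2 + 9 * A * (A + 2 * B))
    (h2 : B * (A - B) ^ 2 = (A - B) ^ 2 + 9 * B * (B + 2 * A)) :
    A + B = 5 ∧ A * B = -5 := by
  have hd := sub_sq_eq_of_two_orbit hAB h1 h2
  have hp := mul_eq_neg_add_of_two_orbit hAB h1 h2
  have hs : A + B ≠ 0 := fun hs ↦ by
    have : (A - B) ^ 2 = 0 := by rw [hd, hs, mul_zero]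
    exact sub_ne_zero.mpr hAB (pow_eq_zero_iff two_ne_zero |>.mp this)
  have hsum : A + B = 5 := mul_right_cancel₀ hs (by linear_combination hd + 4 * hp)
  exact ⟨hsum, by linear_combination hp - hsum⟩

end TwoOrbit

theorem Complex.sq_add_seven_mul_add_one_eq_zero_iff (w : ℂ) :
    w ^ 2 + 7 * w + 1 = 0 ↔
      w = (-7 + (Real.sqrt 45 : ℂ)) / 2 ∨ w = (-7 - (Real.sqrt 45 : ℂ)) / 2 := by
  have hdiscrim : discrim (1 : ℂ) 7 1 = (Real.sqrt 45 : ℂ) * (Real.sqrt 45 : ℂ) := by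
    rw [← Complex.ofReal_mul, Real.mul_self_sqrt (by norm_num)]
    norm_num [discrim]
  have := quadratic_eq_zero_iff one_ne_zero hdiscrim w
  simp only [one_mul, mul_one] at this
  rwa [sq]

/-- Reduction of the two-orbit system in the variables `A = a³`, `B = b³`:
the equations `A(A−B)² = (A−B)² + 9A(A+2B)`, `B(A−B)² = (A−B)² + 9B(B+2A)` with
`A ≠ B` force `A + B = 5`, `AB = −5`, `A² + 7AB + B² = 0`, `B ≠ 0`, and
`w = A/B` satisfies `w² + 7w + 1 = 0`, i.e. `w = (−7 ± √45)/2`. -/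
theorem stmt_13 (A B : ℂ) (hAB : A ≠ B)
    (h1 : A * (A - B) ^ 2 = (A - B) ^ 2 + 9 * A * (A + 2 * B))
    (h2 : B * (A - B) ^ 2 = (A - B) ^ 2 + 9 * B * (B + 2 * A)) :
    A + B = 5 ∧ A * B = -5 ∧ A ^ 2 + 7 * A * B + B ^ 2 = 0 ∧ B ≠ 0 ∧
      (A / B) ^ 2 + 7 * (A / B) + 1 = 0 ∧
      (A / B = (-7 + (Real.sqrt 45 : ℂ)) / 2 ∨
       A / B = (-7 - (Real.sqrt 45 : ℂ)) / 2) := by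
  obtain ⟨hsum, hprod⟩ := add_eq_five_and_mul_eq_neg_five_of_two_orbit hAB h1 h2
  have hq : A ^ 2 + 7 * A * B + B ^ 2 = 0 := by
    linear_combination (A + B + 5) * hsum + 5 * hprod
  have hB : B ≠ 0 := by
    rintro rfl
    norm_num at hprod
  have hw : (A / B) ^ 2 + 7 * (A / B) + 1 = 0 := by
    field_simp
    linear_combination hq
  exact ⟨hsum, hprod, hq, hB, hw, (Complex.sq_add_seven_mul_add_one_eq_zero_iff _).mp hw⟩
end

section
/- Let I ⊆ ℝ be an open interval, N ≥ 1, and let x₁, …, x_N : I → ℂ be differentiable functions whose values are pairwise distinct at every t ∈ I (j ≠ p implies x_j(t) ≠ x_p(t)). Define u(t, x) = Σ_{j=1}^{N} 2·(x − x_j(t))^{−2} for x ∈ ℂ with x ≠ x_j(t) for all j. Suppose that for every t ∈ I and every such x, the function t ↦ u(t,x) is differentiable at t and its derivative equals 6·u(t,x)·u_x(t,x) − u_{xxx}(t,x), where u_x and u_{xxx} denote the first and third complex derivatives of x ↦ u(t,x). Then for every t ∈ I and every j: (1) x_j'(t) = −12·Σ_{p≠j} (x_j(t) − x_p(t))^{−2},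 and (2) Σ_{p≠j} (x_j(t) − x_p(t))^{−3} = 0. -/
/-!
Near a pole `x_j` the KdV defect `u_t - 6 u u_x + u_xxx` of `u = Σ_p 2 (x - x_p)⁻²` has a pole
of order three: since `6 u u_x - u_xxx = -48 Σ_{p ≠ k} (x - x_p)⁻² (x - x_k)⁻³` (the diagonal
terms cancel), the defect is `(4 ẋ_j + 48 B(x)) (x - x_j)⁻³ + 48 A(x) (x - x_j)⁻² + O(1)` with
`A = Σ_{p ≠ j} (x - x_p)⁻³` and `B = Σ_{p ≠ j} (x - x_p)⁻²`. Multiplying by `(x - x_j)³` gives a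
function differentiable at `x_j` that vanishes nearby, so its value `4 ẋ_j + 48 B(x_j)` and its
derivative `48 A(x_j) + 48 B'(x_j) = -48 A(x_j)` vanish.
-/

open Finset

/-- The rational KdV ansatz: `u(t,x) = Σ_j 2(x − x_j(t))^{−2}`. -/
noncomputable def kdvU (N : ℕ) (X : Fin N → ℝ → ℂ) (t : ℝ) (x : ℂ) : ℂ :=
  ∑ j : Fin N, 2 * ((x - X j t) ^ 2)⁻¹

open Filter Topology

theorem hasDerivAt_inv_pow {𝕜 : Type*} [NontriviallyNormedField 𝕜] {u : 𝕜} (hu : u ≠ 0)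
    (n : ℕ) : HasDerivAt (fun w : 𝕜 => (w ^ n)⁻¹) (-n * (u ^ (n + 1))⁻¹) u := by
  refine ((hasDerivAt_pow n u).inv (pow_ne_zero n hu)).congr_deriv ?_
  rcases n with _ | n
  · simp
  · rw [Nat.cast_add_one, Nat.add_sub_cancel]
    field_simp
    ring

section PoleSum

variable {ι : Type*}

noncomputable def poleSum (s : Finset ι) (a : ι → ℂ) (n : ℕ) (z : ι → ℂ) (x : ℂ) : ℂ :=
  ∑ p ∈ s, a p * ((x - z p) ^ n)⁻¹

variable {s : Finset ι} {a : ι → ℂ} {n : ℕ} {z : ι → ℂ} {x : ℂ}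

theorem hasDerivAt_poleSum (hx : ∀ p ∈ s, x ≠ z p) :
    HasDerivAt (poleSum s a n z) (poleSum s (fun p => -n * a p) (n + 1) z x) x := by
  unfold poleSum
  refine HasDerivAt.fun_sum fun p hp => ?_
  have h := ((hasDerivAt_inv_pow (sub_ne_zero.2 (hx p hp)) n).comp_sub_const x (z p)).const_mul (a p)
  exact h.congr_deriv (by ring)

theorem hasDerivAt_poleSum_of_moving {Z : ι → ℝ → ℂ} {v : ι → ℂ} {t : ℝ}
    (hZ : ∀ p ∈ s, HasDerivAt (Z p) (v p) t) (hx : ∀ p ∈ s, x ≠ Z p t) :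
    HasDerivAt (fun τ => poleSum s a n (fun p => Z p τ) x)
      (poleSum s (fun p => n * a p * v p) (n + 1) (fun p => Z p t) x) t := by
  unfold poleSum
  refine HasDerivAt.fun_sum fun p hp => ?_
  have h := (((hasDerivAt_inv_pow (sub_ne_zero.2 (hx p hp)) n).comp t
    ((hZ p hp).const_sub x))).const_mul (a p)
  exact h.congr_deriv (by ring)

theorem eventually_ne_poles (hx : ∀ p ∈ s, x ≠ z p) : ∀ᶠ y in 𝓝 x, ∀ p ∈ s, y ≠ z p :=
  (eventually_all_finset s).2 fun p hp => eventually_ne_nhds (hx p hp)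

theorem iterate_deriv_poleSum_eventuallyEq (hx : ∀ p ∈ s, x ≠ z p) (k : ℕ) :
    deriv^[k] (poleSum s a n z) =ᶠ[𝓝 x]
      poleSum s (fun p => (-1) ^ k * n.ascFactorial k * a p) (n + k) z := by
  induction k with
  | zero => simp
  | succ k ih =>
    rw [Function.iterate_succ_apply']
    refine ih.deriv.trans ?_
    filter_upwards [eventually_ne_poles hx] with y hy
    rw [(hasDerivAt_poleSum hy).deriv, ← add_assoc]
    congr 1
    funext p
    push_cast [Nat.ascFactorial_succ]
    ring

theorem poleSum_eq_add_poleSum_erase [DecidableEq ι] {j : ι} (hj : j ∈ s) :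
    poleSum s a n z x = a j * ((x - z j) ^ n)⁻¹ + poleSum (s.erase j) a n z x :=
  (add_sum_erase s _ hj).symm

theorem differentiableAt_poleSum (hx : ∀ p ∈ s, x ≠ z p) :
    DifferentiableAt ℂ (poleSum s a n z) x :=
  (hasDerivAt_poleSum hx).differentiableAt

variable [DecidableEq ι]

noncomputable def offDiagPoleSum (s : Finset ι) (z : ι → ℂ) (x : ℂ) : ℂ :=
  ∑ p ∈ s, ((x - z p) ^ 2)⁻¹ * poleSum (s.erase p) 1 3 z x

/-- With `w p = 4 ẋ_p` this is `u_t - 6 u u_x + u_xxx` for `u = poleSum s 2 2 z`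
(see `kdv_rhs_poleSum_eq`). -/
noncomputable def kdvDefect (s : Finset ι) (w z : ι → ℂ) (x : ℂ) : ℂ :=
  poleSum s w 3 z x + 48 * offDiagPoleSum s z x

theorem kdv_rhs_poleSum_eq :
    6 * poleSum s (fun _ => 2) 2 z x * poleSum s (fun _ => -4) 3 z x
      - poleSum s (fun _ => -48) 5 z x = -48 * offDiagPoleSum s z x := by
  unfold offDiagPoleSum poleSum
  rw [mul_assoc, sum_mul_sum, mul_sum, mul_sum, ← sum_sub_distrib]
  refine sum_congr rfl fun p hp => ?_
  have hdiag : ((x - z p) ^ 2)⁻¹ * ((x - z p) ^ 3)⁻¹ = ((x - z p) ^ 5)⁻¹ := by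
    rw [← mul_inv, ← pow_add]
  rw [← add_sum_erase _ _ hp, ← mul_sum, ← mul_sum]
  simp only [Pi.one_apply, one_mul]
  linear_combination -48 * hdiag

theorem offDiagPoleSum_eq_add_erase {j : ι} (hj : j ∈ s) :
    offDiagPoleSum s z x = ((x - z j) ^ 2)⁻¹ * poleSum (s.erase j) 1 3 z x
      + poleSum (s.erase j) 1 2 z x * ((x - z j) ^ 3)⁻¹ + offDiagPoleSum (s.erase j) z x := by
  have hsplit : ∀ p ∈ s.erase j, poleSum (s.erase p) 1 3 z x
      = ((x - z j) ^ 3)⁻¹ + poleSum ((s.erase j).erase p) 1 3 z x := fun p hp => by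
    rw [poleSum_eq_add_poleSum_erase (mem_erase.2 ⟨(ne_of_mem_erase hp).symm, hj⟩),
      erase_right_comm, Pi.one_apply, one_mul]
  rw [offDiagPoleSum, ← add_sum_erase _ _ hj, sum_congr rfl fun p hp => by rw [hsplit p hp],
    add_assoc]
  simp only [offDiagPoleSum, poleSum, mul_add, sum_add_distrib, sum_mul, Pi.one_apply, one_mul]

theorem differentiableAt_kdvDefect {w : ι → ℂ} (hx : ∀ p ∈ s, x ≠ z p) :
    DifferentiableAt ℂ (kdvDefect s w z) x := by
  have hinv : ∀ p ∈ s, DifferentiableAt ℂ (fun y => ((y - z p) ^ 2)⁻¹) x := fun p hp =>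
    ((differentiableAt_id.sub_const _).pow 2).inv (pow_ne_zero 2 (sub_ne_zero.2 (hx p hp)))
  refine (differentiableAt_poleSum hx).add (DifferentiableAt.const_mul ?_ 48)
  exact DifferentiableAt.fun_sum fun p hp =>
    (hinv p hp).mul (differentiableAt_poleSum fun q hq => hx q (mem_of_mem_erase hq))

theorem pow_three_mul_kdvDefect {w : ι → ℂ} {j : ι} (hj : j ∈ s) (hx : x ≠ z j) :
    (x - z j) ^ 3 * kdvDefect s w z x = w j + 48 * poleSum (s.erase j) 1 2 z x
      + 48 * ((x - z j) * poleSum (s.erase j) 1 3 z x)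
      + (x - z j) ^ 3 * kdvDefect (s.erase j) w z x := by
  have hx' : x - z j ≠ 0 := sub_ne_zero.2 hx
  rw [kdvDefect, kdvDefect, poleSum_eq_add_poleSum_erase hj, offDiagPoleSum_eq_add_erase hj]
  field_simp
  ring

end PoleSum

theorem HasDerivAt.eq_zero_and_eq_zero_of_nhdsNE {𝕜 F : Type*} [NontriviallyNormedField 𝕜]
    [NormedAddCommGroup F] [NormedSpace 𝕜 F] {f : 𝕜 → F} {f' : F} {x : 𝕜}
    (hf : HasDerivAt f f' x) (h : ∀ᶠ y in 𝓝[≠] x, f y = 0) : f x = 0 ∧ f' = 0 := by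
  have hx : f x = 0 := tendsto_nhds_unique (hf.continuousAt.tendsto.mono_left nhdsWithin_le_nhds)
    (tendsto_const_nhds.congr' (h.mono fun y hy => hy.symm))
  have hloc : f =ᶠ[𝓝 x] fun _ => 0 := by
    rw [← nhdsNE_sup_pure x]
    exact eventually_sup.2 ⟨h, hx⟩
  exact ⟨hx, hf.unique ((hasDerivAt_const x 0).congr_of_eventuallyEq hloc)⟩

section Poles

variable {ι : Type*} [DecidableEq ι] {s : Finset ι} {w z : ι → ℂ} {j : ι}

theorem eventually_nhdsNE_ne_poles (hj : j ∈ s) (hdist : ∀ p ∈ s.erase j, z j ≠ z p) :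
    ∀ᶠ x in 𝓝[≠] z j, ∀ p ∈ s, x ≠ z p := by
  filter_upwards [nhdsWithin_le_nhds (eventually_ne_poles hdist), self_mem_nhdsWithin]
    with x hx hxj p hp
  rcases eq_or_ne p j with rfl | hpj
  · exact hxj
  · exact hx p (mem_erase.2 ⟨hpj, hp⟩)

theorem kdvDefect_pole_conditions (hj : j ∈ s) (hdist : ∀ p ∈ s.erase j, z j ≠ z p)
    (hE : ∀ x, (∀ p ∈ s, x ≠ z p) → kdvDefect s w z x = 0) :
    w j + 48 * poleSum (s.erase j) 1 2 z (z j) = 0 ∧ poleSum (s.erase j) 1 3 z (z j) = 0 := by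
  set A := poleSum (s.erase j) 1 3 z
  set B := poleSum (s.erase j) 1 2 z
  set G : ℂ → ℂ := fun x => w j + 48 * B x + 48 * ((x - z j) * A x)
    + (x - z j) ^ 3 * kdvDefect (s.erase j) w z x
  have hG : HasDerivAt G (-48 * A (z j)) (z j) := by
    have hB : HasDerivAt B (-2 * A (z j)) (z j) := by
      refine (hasDerivAt_poleSum hdist).congr_deriv ?_
      simp [A, poleSum, mul_sum]
    have hshift := (hasDerivAt_id' (z j)).sub_const (z j)
    have hlin := hshift.fun_mul (hasDerivAt_poleSum (a := 1) (n := 3) hdist)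
    have hcube := (hshift.fun_pow 3).fun_mul (differentiableAt_kdvDefect (w := w) hdist).hasDerivAt
    refine ((((hasDerivAt_const _ (w j)).fun_add (hB.const_mul 48)).fun_add
      (hlin.const_mul 48)).fun_add hcube).congr_deriv ?_
    simp only [sub_self]
    ring
  have hGE : ∀ᶠ x in 𝓝[≠] z j, G x = 0 := by
    filter_upwards [eventually_nhdsNE_ne_poles hj hdist, self_mem_nhdsWithin] with x hx hxj
    simp only [G]
    rw [← pow_three_mul_kdvDefect hj hxj, hE x hx, mul_zero]
  obtain ⟨hG0, hG1⟩ := hG.eq_zero_and_eq_zero_of_nhdsNE hGE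
  exact ⟨by simpa [G] using hG0, by simpa using hG1⟩

theorem kdvDefect_eq_zero_of_hasDerivAt {Z : ι → ℝ → ℂ} {v : ι → ℂ} {t : ℝ} {x : ℂ}
    (hZ : ∀ p ∈ s, HasDerivAt (Z p) (v p) t) (hx : ∀ p ∈ s, x ≠ Z p t)
    (hKdV : HasDerivAt (fun τ => poleSum s (fun _ => 2) 2 (fun p => Z p τ) x)
      (6 * poleSum s (fun _ => 2) 2 (fun p => Z p t) x
          * deriv (poleSum s (fun _ => 2) 2 (fun p => Z p t)) x
        - deriv^[3] (poleSum s (fun _ => 2) 2 (fun p => Z p t)) x) t) :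
    kdvDefect s (fun p => 4 * v p) (fun p => Z p t) x = 0 := by
  have hu₁ := (iterate_deriv_poleSum_eventuallyEq (a := fun _ => 2) (n := 2) hx 1).eq_of_nhds
  have hu₃ := (iterate_deriv_poleSum_eventuallyEq (a := fun _ => 2) (n := 2) hx 3).eq_of_nhds
  norm_num [Nat.ascFactorial] at hu₁ hu₃
  have h := (hasDerivAt_poleSum_of_moving (a := fun _ => 2) (n := 2) hZ hx).unique hKdV
  norm_num at h
  rw [hu₁, hu₃, kdv_rhs_poleSum_eq] at h
  rw [kdvDefect, h]
  ring

end Poles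

theorem stmt_14_general (I : Set ℝ) (N : ℕ) (X : Fin N → ℝ → ℂ)
    (hdiff : ∀ j : Fin N, ∀ t ∈ I, DifferentiableAt ℝ (X j) t)
    (hdist : ∀ t ∈ I, ∀ j p : Fin N, j ≠ p → X j t ≠ X p t)
    (hKdV : ∀ t ∈ I, ∀ x : ℂ, (∀ j : Fin N, x ≠ X j t) →
      HasDerivAt (fun s : ℝ => kdvU N X s x)
        (6 * kdvU N X t x * deriv (kdvU N X t) x
          - deriv (deriv (deriv (kdvU N X t))) x) t) :
    ∀ t ∈ I, ∀ j : Fin N,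
      (deriv (X j) t = -12 * ∑ p ∈ univ.erase j, ((X j t - X p t) ^ 2)⁻¹) ∧
      (∑ p ∈ univ.erase j, ((X j t - X p t) ^ 3)⁻¹ = 0) := by
  intro t ht j
  have hE : ∀ x, (∀ p ∈ univ, x ≠ X p t) →
      kdvDefect univ (fun p => 4 * deriv (X p) t) (fun p => X p t) x = 0 := fun x hx =>
    kdvDefect_eq_zero_of_hasDerivAt (fun p _ => (hdiff p t ht).hasDerivAt) hx
      (hKdV t ht x fun p => hx p (mem_univ p))
  obtain ⟨hmotion, hlocus⟩ := kdvDefect_pole_conditions (mem_univ j)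
    (fun p hp => hdist t ht j p (ne_of_mem_erase hp).symm) hE
  simp only [poleSum, Pi.one_apply, one_mul] at hmotion hlocus
  exact ⟨by linear_combination hmotion / 4, hlocus⟩

/-- If `u(t,x) = Σ_j 2(x − x_j(t))^{−2}` (with differentiable, pairwise distinct
poles `x_j(t)`) satisfies the KdV equation `u_t = 6uu_x − u_{xxx}` away from the
poles, then the poles move by `x_j' = −12·Σ_{p≠j}(x_j − x_p)^{−2}` and satisfy the
locus constraint `Σ_{p≠j}(x_j − x_p)^{−3} = 0`. -/
theorem stmt_14 (I : Set ℝ) (hIopen : IsOpen I) (hIconn : I.OrdConnected)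
    (N : ℕ) (hN : 1 ≤ N) (X : Fin N → ℝ → ℂ)
    (hdiff : ∀ j : Fin N, ∀ t ∈ I, DifferentiableAt ℝ (X j) t)
    (hdist : ∀ t ∈ I, ∀ j p : Fin N, j ≠ p → X j t ≠ X p t)
    (hKdV : ∀ t ∈ I, ∀ x : ℂ, (∀ j : Fin N, x ≠ X j t) →
      HasDerivAt (fun s : ℝ => kdvU N X s x)
        (6 * kdvU N X t x * deriv (kdvU N X t) x
          - deriv (deriv (deriv (kdvU N X t))) x) t) :
    ∀ t ∈ I, ∀ j : Fin N,
      (deriv (X j) t = -12 * ∑ p ∈ univ.erase j, ((X j t - X p t) ^ 2)⁻¹) ∧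
      (∑ p ∈ univ.erase j, ((X j t - X p t) ^ 3)⁻¹ = 0) :=
  stmt_14_general I N X hdiff hdist hKdV
end
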